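/- arXiv:1503.03819 — 4 statements merged into one kernel-verified Lean document; each statement's English description precedes it below -/
import Mathlib

section
/- Let 0 < z < 1, let t > z and let a < b be real numbers. Then, as λ → 0⁺ with λ ∈ (0,1), the probability ℙ( X i ≤ t·log(1/λ) for every integer i with ⌊a·λ^(−z)⌋ ≤ i ≤ ⌊b·λ^(−z)⌋ ) tends to 1. -/
/-!
Union bound: the window contains about `(b - a) λ^(-z)` sites, and each of them is still empty
at time `t log(1/λ)` with probability `exp (-t log (1/λ)) = λ^t`, so the probability that some site
of the window is empty is `O(λ^(t - z))`, which tends to `0` because `t > z`.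
-/

open MeasureTheory ProbabilityTheory Filter

open Finset in
theorem Int.card_Icc_floor_floor_le {α β : ℝ} (h : α ≤ β) :
    (#(Icc ⌊α⌋ ⌊β⌋) : ℝ) ≤ β - α + 2 := by
  rw [Int.card_Icc]
  have hα := Int.sub_one_lt_floor α
  have hβ := Int.floor_le β
  rcases le_or_gt ⌊α⌋ (⌊β⌋ + 1) with hle | hlt
  · rw [← Int.cast_natCast, Int.toNat_of_nonneg (by omega)]
    push_cast
    linarith
  · rw [Int.toNat_of_nonpos (by omega)]
    push_cast
    linarith

theorem Real.exp_neg_mul_log_one_div {l : ℝ} (hl : 0 < l) (t : ℝ) :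
    Real.exp (-(t * Real.log (1 / l))) = l ^ t := by
  rw [Real.rpow_def_of_pos hl, one_div, Real.log_inv, mul_neg, neg_neg, mul_comm]

section

variable {Ω : Type*} [MeasurableSpace Ω] {μ : Measure Ω}

theorem tendsto_measure_of_tendsto_measure_compl [IsProbabilityMeasure μ] {ι : Type*}
    {L : Filter ι} {s : ι → Set Ω}
    (h : Tendsto (fun i => μ (s i)ᶜ) L (nhds 0)) : Tendsto (fun i => μ (s i)) L (nhds 1) := by
  have hlower : Tendsto (fun i => 1 - μ (s i)ᶜ) L (nhds 1) := by
    simpa using ENNReal.Tendsto.sub tendsto_const_nhds h (Or.inl ENNReal.one_ne_top)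
  refine tendsto_of_tendsto_of_tendsto_of_le_of_le hlower tendsto_const_nhds (fun i => ?_)
    (fun i => prob_le_one)
  rw [tsub_le_iff_right, ← measure_univ (μ := μ), ← Set.union_compl_self (s i)]
  exact measure_union_le _ _

theorem measure_exists_lt_le_card_mul {ι : Type*} {X : ι → Ω → ℝ} (I : Finset ι) {s : ℝ}
    {p : ENNReal}
    (h : ∀ i ∈ I, μ {ω | s < X i ω} ≤ p) :
    μ {ω | ∃ i ∈ I, s < X i ω} ≤ I.card * p := by
  have hset : {ω | ∃ i ∈ I, s < X i ω} = ⋃ i ∈ I, {ω | s < X i ω} := by ext; simp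
  calc μ {ω | ∃ i ∈ I, s < X i ω} ≤ ∑ i ∈ I, μ {ω | s < X i ω} :=
        hset ▸ measure_biUnion_finset_le _ _
    _ ≤ I.card * p := by
        rw [← nsmul_eq_mul]; exact Finset.sum_le_card_nsmul _ _ _ h

theorem tendsto_const_mul_rpow_nhdsWithin_Ioo {c e : ℝ} (he : 0 < e) :
    Tendsto (fun l : ℝ => ENNReal.ofReal (c * l ^ e)) (nhdsWithin 0 (Set.Ioo 0 1)) (nhds 0) := by
  have hcont : ContinuousAt (fun l : ℝ => ENNReal.ofReal (c * l ^ e)) 0 :=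
    ENNReal.continuous_ofReal.continuousAt.comp
      ((Real.continuousAt_rpow_const 0 e (Or.inr he.le)).const_mul c)
  simpa [Real.zero_rpow he.ne'] using hcont.tendsto.mono_left nhdsWithin_le_nhds

theorem measure_exists_floor_window_exceeds_le {X : ℤ → Ω → ℝ}
    (hexp : ∀ (i : ℤ) (s : ℝ), 0 ≤ s → μ {ω | s < X i ω} = ENNReal.ofReal (Real.exp (-s)))
    {t z a b l : ℝ} (ht : 0 ≤ t) (hz : 0 ≤ z) (hab : a ≤ b) (hl0 : 0 < l) (hl1 : l ≤ 1) :
    μ {ω | ∃ i ∈ Finset.Icc ⌊a * l ^ (-z)⌋ ⌊b * l ^ (-z)⌋, t * Real.log (1 / l) < X i ω} ≤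
      ENNReal.ofReal ((b - a + 2) * l ^ (t - z)) := by
  set I := Finset.Icc ⌊a * l ^ (-z)⌋ ⌊b * l ^ (-z)⌋
  have hlog : 0 ≤ t * Real.log (1 / l) :=
    mul_nonneg ht (Real.log_nonneg (one_le_one_div hl0 hl1))
  have hcard : (I.card : ℝ) ≤ (b - a) * l ^ (-z) + 2 := by
    have := Int.card_Icc_floor_floor_le
      (mul_le_mul_of_nonneg_right hab (Real.rpow_pos_of_pos hl0 (-z)).le)
    linarith
  have hpow : l ^ (-z) * l ^ t = l ^ (t - z) := by
    rw [← Real.rpow_add hl0, neg_add_eq_sub]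
  have hmono : l ^ t ≤ l ^ (t - z) :=
    Real.rpow_le_rpow_of_exponent_ge hl0 hl1 (by linarith)
  calc _ ≤ I.card * ENNReal.ofReal (l ^ t) :=
        measure_exists_lt_le_card_mul I fun i _ => by
          rw [hexp i _ hlog, Real.exp_neg_mul_log_one_div hl0 t]
    _ = ENNReal.ofReal (I.card * l ^ t) := by
        rw [ENNReal.ofReal_mul (Nat.cast_nonneg _), ENNReal.ofReal_natCast]
    _ ≤ ENNReal.ofReal ((b - a + 2) * l ^ (t - z)) := by
        refine ENNReal.ofReal_le_ofReal ?_
        calc (I.card : ℝ) * l ^ t ≤ ((b - a) * l ^ (-z) + 2) * l ^ t :=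
              mul_le_mul_of_nonneg_right hcard (Real.rpow_pos_of_pos hl0 t).le
          _ = (b - a) * l ^ (t - z) + 2 * l ^ t := by rw [← hpow]; ring
          _ ≤ (b - a + 2) * l ^ (t - z) := by nlinarith

end

theorem statement1_general
    {Ω : Type*} [MeasurableSpace Ω] (μ : Measure Ω) [IsProbabilityMeasure μ]
    (X : ℤ → Ω → ℝ)
    (hexp : ∀ (i : ℤ) (s : ℝ), 0 ≤ s → μ {ω | s < X i ω} = ENNReal.ofReal (Real.exp (-s)))
    (t z a b : ℝ) (hz0 : 0 < z) (hzt : z < t) (hab : a < b) :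
    Tendsto
      (fun l : ℝ =>
        μ {ω | ∀ i : ℤ, ⌊a * l ^ (-z)⌋ ≤ i → i ≤ ⌊b * l ^ (-z)⌋ →
            X i ω ≤ t * Real.log (1 / l)})
      (nhdsWithin 0 (Set.Ioo 0 1)) (nhds 1) := by
  refine tendsto_measure_of_tendsto_measure_compl ?_
  refine tendsto_of_tendsto_of_tendsto_of_le_of_le' tendsto_const_nhds
    (tendsto_const_mul_rpow_nhdsWithin_Ioo (c := b - a + 2) (sub_pos.mpr hzt))
    (Eventually.of_forall fun _ => zero_le) ?_
  filter_upwards [self_mem_nhdsWithin] with l hl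
  have hcompl : {ω | ∀ i : ℤ, ⌊a * l ^ (-z)⌋ ≤ i → i ≤ ⌊b * l ^ (-z)⌋ →
      X i ω ≤ t * Real.log (1 / l)}ᶜ =
      {ω | ∃ i ∈ Finset.Icc ⌊a * l ^ (-z)⌋ ⌊b * l ^ (-z)⌋, t * Real.log (1 / l) < X i ω} := by
    ext; simp [and_assoc]
  rw [hcompl]
  exact measure_exists_floor_window_exceeds_le hexp (hz0.trans hzt).le hz0.le hab.le hl.1 hl.2.le

theorem statement1
    {Ω : Type*} [MeasurableSpace Ω] (μ : Measure Ω) [IsProbabilityMeasure μ]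
    (X : ℤ → Ω → ℝ) (hmeas : ∀ i, Measurable (X i))
    (hindep : iIndepFun X μ)
    (hexp : ∀ (i : ℤ) (s : ℝ), 0 ≤ s → μ {ω | s < X i ω} = ENNReal.ofReal (Real.exp (-s)))
    (t z a b : ℝ) (hz0 : 0 < z) (hz1 : z < 1) (hzt : z < t) (hab : a < b) :
    Tendsto
      (fun l : ℝ =>
        μ {ω | ∀ i : ℤ, ⌊a * l ^ (-z)⌋ ≤ i → i ≤ ⌊b * l ^ (-z)⌋ →
            X i ω ≤ t * Real.log (1 / l)})
      (nhdsWithin 0 (Set.Ioo 0 1)) (nhds 1) :=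
  statement1_general μ X hexp t z a b hz0 hzt hab
end

section
/- Fix p ∈ (0,∞), T > 0, A > 0, a real t with 0 < t < 1, and real numbers a < b. Let (λ_n) ⊂ (0,1) and (π_n) ⊂ [1,∞) satisfy λ_n → 0 and n_{λ_n}/(a_{λ_n}·π_n) → p. Set 𝔳_n = max(T/p, 2A)·|n_{λ_n}/(a_{λ_n}·π_n) − p| and k_n = ⌊a_{λ_n}·π_n·(ε_{λ_n} + 𝔳_n)⌋. Then ℙ( X i ≤ t·a_{λ_n} for every integer i with ⌊a·k_n⌋ ≤ i ≤ ⌊b·k_n⌋ ) tends to 0 as n → ∞. -/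
open MeasureTheory ProbabilityTheory Filter

/-- The rescaled time scale `a_λ = log(1/λ)`. -/
noncomputable def aLam (l : ℝ) : ℝ := Real.log (1 / l)

/-- The macroscopic space scale `n_λ = ⌊1/(λ·log(1/λ))⌋`. -/
noncomputable def nLam (l : ℝ) : ℤ := ⌊1 / (l * Real.log (1 / l))⌋

/-- `ε_λ = 1/(log(1/λ))³`. -/
noncomputable def epsLam (l : ℝ) : ℝ := 1 / (Real.log (1 / l)) ^ 3

/-- `𝔳_{λ,π} = max(T/p, 2A)·|n_λ/(a_λ·π) − p|`. -/
noncomputable def vFrak (p T A l π : ℝ) : ℝ :=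
  max (T / p) (2 * A) * |(nLam l : ℝ) / (aLam l * π) - p|

/-- The auxiliary scale `k_{λ,π} = ⌊a_λ·π·(ε_λ + 𝔳_{λ,π})⌋`. -/
noncomputable def kLam (p T A l π : ℝ) : ℤ :=
  ⌊aLam l * π * (epsLam l + vFrak p T A l π)⌋

/-! The window `⌊a k⌋ ≤ i ≤ ⌊b k⌋` contains `m ≥ (b - a) k` sites, so by independence the
probability that all of them are seeded by time `t a_λ` is
`(1 - e^{-t a_λ})^m ≤ exp (-m e^{-t a_λ})`. Since `𝔳 ≥ 0` we have
`k ≥ a_λ π ε_λ - 1 = π / a_λ² - 1`, and in the regime eventually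
`π > n_λ / (2 p a_λ) > (e^{a_λ} / a_λ - 1) / (2 p a_λ)`, so `m e^{-t a_λ}` grows like
`e^{(1 - t) a_λ} / a_λ⁴ → ∞`. -/

open Finset Topology

section Occupation

open Real

variable {Ω ι : Type*} [MeasurableSpace Ω] {μ : Measure Ω} [IsProbabilityMeasure μ]
  {X : ι → Ω → ℝ}

lemma measure_le_eq_one_sub_exp {Y : Ω → ℝ} (hY : Measurable Y)
    (hexp : ∀ s : ℝ, 0 ≤ s → μ {ω | s < Y ω} = ENNReal.ofReal (exp (-s)))
    {s : ℝ} (hs : 0 ≤ s) :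
    μ {ω | Y ω ≤ s} = ENNReal.ofReal (1 - exp (-s)) := by
  have hcompl : {ω | Y ω ≤ s} = {ω | s < Y ω}ᶜ := by
    ext ω; simp [not_lt]
  have hmeas : MeasurableSet {ω | s < Y ω} := hY measurableSet_Ioi
  rw [hcompl, prob_compl_eq_one_sub hmeas, hexp s hs,
    ENNReal.ofReal_sub 1 (exp_nonneg _), ENNReal.ofReal_one]

lemma measure_forall_mem_le_eq_pow (hX : ∀ i, Measurable (X i)) (hindep : iIndepFun X μ)
    (hexp : ∀ i (s : ℝ), 0 ≤ s → μ {ω | s < X i ω} = ENNReal.ofReal (exp (-s)))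
    (S : Finset ι) {s : ℝ} (hs : 0 ≤ s) :
    μ {ω | ∀ i ∈ S, X i ω ≤ s} = ENNReal.ofReal ((1 - exp (-s)) ^ #S) := by
  have hinter : {ω | ∀ i ∈ S, X i ω ≤ s} = ⋂ i ∈ S, {ω | X i ω ≤ s} := by
    ext ω; simp
  rw [hinter, hindep.meas_biInter (s := fun i => {ω | X i ω ≤ s})
      fun i _ => ⟨Set.Iic s, measurableSet_Iic, rfl⟩,
    prod_congr rfl fun i _ => measure_le_eq_one_sub_exp (hX i) (hexp i) hs, prod_const,
    ← ENNReal.ofReal_pow (sub_nonneg.2 (exp_le_one_iff.2 (neg_nonpos.2 hs)))]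

lemma measure_forall_mem_le_le_exp (hX : ∀ i, Measurable (X i)) (hindep : iIndepFun X μ)
    (hexp : ∀ i (s : ℝ), 0 ≤ s → μ {ω | s < X i ω} = ENNReal.ofReal (exp (-s)))
    (S : Finset ι) {s : ℝ} (hs : 0 ≤ s) :
    μ {ω | ∀ i ∈ S, X i ω ≤ s} ≤ ENNReal.ofReal (exp (-(#S * exp (-s)))) := by
  rw [measure_forall_mem_le_eq_pow hX hindep hexp S hs]
  refine ENNReal.ofReal_le_ofReal ?_
  calc (1 - exp (-s)) ^ #S ≤ exp (-exp (-s)) ^ #S :=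
        pow_le_pow_left₀ (sub_nonneg.2 (exp_le_one_iff.2 (neg_nonpos.2 hs)))
          (one_sub_le_exp_neg _) _
    _ = exp (-(#S * exp (-s))) := by rw [← exp_nat_mul]; ring_nf

theorem tendsto_measure_forall_mem_le_zero (hX : ∀ i, Measurable (X i)) (hindep : iIndepFun X μ)
    (hexp : ∀ i (s : ℝ), 0 ≤ s → μ {ω | s < X i ω} = ENNReal.ofReal (exp (-s)))
    (S : ℕ → Finset ι) {s : ℕ → ℝ} (hs : ∀ n, 0 ≤ s n)
    (hcount : Tendsto (fun n => #(S n) * exp (-s n)) atTop atTop) :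
    Tendsto (fun n => μ {ω | ∀ i ∈ S n, X i ω ≤ s n}) atTop (𝓝 0) := by
  have hbound : Tendsto (fun n => ENNReal.ofReal (exp (-(#(S n) * exp (-s n))))) atTop
      (𝓝 0) := by
    simpa using ENNReal.tendsto_ofReal
      (tendsto_exp_atBot.comp (tendsto_neg_atBot_iff.2 hcount))
  exact tendsto_of_tendsto_of_tendsto_of_le_of_le tendsto_const_nhds hbound
    (fun n => zero_le) fun n => measure_forall_mem_le_le_exp hX hindep hexp (S n) (hs n)

end Occupation

lemma le_card_Icc_floor {a b : ℝ} (k : ℝ) :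
    (b - a) * k ≤ #(Icc ⌊a * k⌋ ⌊b * k⌋) := by
  have hcard : ((⌊b * k⌋ + 1 - ⌊a * k⌋ : ℤ) : ℝ) ≤ #(Icc ⌊a * k⌋ ⌊b * k⌋) := by
    rw [← Int.cast_natCast, Int.card_Icc]
    exact_mod_cast Int.self_le_toNat _
  have hlo : (⌊a * k⌋ : ℝ) ≤ a * k := Int.floor_le _
  have hhi : b * k - 1 < ⌊b * k⌋ := Int.sub_one_lt_floor _
  push_cast at hcard
  linarith

lemma aLam_pos {l : ℝ} (hl : l ∈ Set.Ioo (0 : ℝ) 1) : 0 < aLam l :=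
  Real.log_pos (one_lt_one_div hl.1 hl.2)

lemma tendsto_aLam_nhdsGT_zero : Tendsto aLam (𝓝[>] 0) atTop := by
  have hinv : Tendsto (fun l : ℝ => l⁻¹) (𝓝[>] 0) atTop := tendsto_inv_nhdsGT_zero
  exact (Real.tendsto_log_atTop.comp hinv).congr fun l => by simp [aLam]

lemma exp_aLam_div_aLam_sub_one_lt_nLam {l : ℝ} (hl : 0 < l) :
    Real.exp (aLam l) / aLam l - 1 < nLam l := by
  have hexp : Real.exp (aLam l) = 1 / l := Real.exp_log (by positivity)
  have hfrac : 1 / (l * Real.log (1 / l)) = Real.exp (aLam l) / aLam l := by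
    rw [hexp, aLam]; field_simp
  rw [nLam, hfrac]
  exact Int.sub_one_lt_floor _

lemma vFrak_nonneg {p T : ℝ} (hp : 0 < p) (hT : 0 < T) (A l r : ℝ) : 0 ≤ vFrak p T A l r :=
  mul_nonneg ((div_pos hT hp).le.trans (le_max_left _ _)) (abs_nonneg _)

lemma div_sq_sub_one_le_kLam {p T : ℝ} (hp : 0 < p) (hT : 0 < T) (A : ℝ) {l r : ℝ}
    (hl : 0 ≤ aLam l) (hr : 0 ≤ r) :
    r / aLam l ^ 2 - 1 ≤ kLam p T A l r := by
  have hε : aLam l * r * epsLam l = r / aLam l ^ 2 := by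
    change aLam l * r * (1 / aLam l ^ 3) = r / aLam l ^ 2
    rcases hl.eq_or_lt with h | h
    · simp [← h]
    · field_simp
  have hv : 0 ≤ aLam l * r * vFrak p T A l r :=
    mul_nonneg (mul_nonneg hl hr) (vFrak_nonneg hp hT A l r)
  have hfloor := Int.sub_one_lt_floor (aLam l * r * (epsLam l + vFrak p T A l r))
  rw [kLam]
  linarith [mul_add (aLam l * r) (epsLam l) (vFrak p T A l r)]

lemma exp_div_pow_sub_le_kLam {p T : ℝ} (hp : 0 < p) (hT : 0 < T) (A : ℝ) {l r : ℝ}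
    (hl : 0 < l) (hr : 0 < r) (hy : 1 ≤ aLam l)
    (hratio : (nLam l : ℝ) / (aLam l * r) < 2 * p) :
    Real.exp (aLam l) / (2 * p * aLam l ^ 4) - (1 / (2 * p) + 1) ≤ kLam p T A l r := by
  set y := aLam l
  have hy0 : 0 < y := by linarith
  have hn : Real.exp y / y - 1 < 2 * p * y * r := by
    rw [div_lt_iff₀ (by positivity)] at hratio
    linarith [exp_aLam_div_aLam_sub_one_lt_nLam hl]
  have hry : (Real.exp y / y - 1) / (2 * p * y ^ 3) ≤ r / y ^ 2 := by
    rw [div_le_div_iff₀ (by positivity) (by positivity)]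
    nlinarith [pow_pos hy0 2]
  have hy3 : 1 / (2 * p * y ^ 3) ≤ 1 / (2 * p) :=
    one_div_le_one_div_of_le (by positivity) (le_mul_of_one_le_right (by positivity)
      (one_le_pow₀ hy))
  have hsplit : (Real.exp y / y - 1) / (2 * p * y ^ 3)
      = Real.exp y / (2 * p * y ^ 4) - 1 / (2 * p * y ^ 3) := by
    field_simp
  linarith [div_sq_sub_one_le_kLam hp hT A hy0.le hr.le]

lemma tendsto_exp_mul_div_pow_sub_atTop {r C D : ℝ} (hr : 0 < r) (hC : 0 < C) (hD : 0 < D)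
    (c : ℝ) : Tendsto (fun y => C * (Real.exp (r * y) / (D * y ^ 4) - c)) atTop atTop := by
  have h : Tendsto (fun y => Real.exp (r * y) / y ^ 4 / D) atTop atTop := by
    simpa only [Real.rpow_natCast] using
      (tendsto_exp_mul_div_rpow_atTop (4 : ℕ) r hr).atTop_div_const hD
  exact (tendsto_atTop_add_const_right _ (-c) h).const_mul_atTop hC |>.congr fun y => by ring_nf

lemma tendsto_card_window_mul_exp {p T t a b : ℝ} (hp : 0 < p) (hT : 0 < T) (ht0 : 0 ≤ t)
    (ht1 : t < 1) (hab : a < b) (A : ℝ) {lam r : ℕ → ℝ} (hlam : ∀ n, lam n ∈ Set.Ioo (0 : ℝ) 1)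
    (hr : ∀ n, 1 ≤ r n) (hlam0 : Tendsto lam atTop (𝓝 0))
    (hreg : Tendsto (fun n => (nLam (lam n) : ℝ) / (aLam (lam n) * r n)) atTop (𝓝 p)) :
    Tendsto (fun n => (#(Icc ⌊a * (kLam p T A (lam n) (r n) : ℝ)⌋
        ⌊b * (kLam p T A (lam n) (r n) : ℝ)⌋) : ℝ) * Real.exp (-(t * aLam (lam n))))
      atTop atTop := by
  have ha : Tendsto (fun n => aLam (lam n)) atTop atTop :=
    tendsto_aLam_nhdsGT_zero.comp
      (tendsto_nhdsWithin_iff.2 ⟨hlam0, .of_forall fun n => (hlam n).1⟩)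
  set c := 1 / (2 * p) + 1
  refine tendsto_atTop_mono' _ ?_ ((tendsto_exp_mul_div_pow_sub_atTop (sub_pos.2 ht1)
    (sub_pos.2 hab) (by positivity : 0 < 2 * p) c).comp ha)
  filter_upwards [ha.eventually_ge_atTop 1, hreg.eventually_lt_const (by linarith : p < 2 * p)]
    with n hy hratio
  set y := aLam (lam n)
  set k := (kLam p T A (lam n) (r n) : ℝ)
  have hk := exp_div_pow_sub_le_kLam hp hT A (hlam n).1 (by linarith [hr n]) hy hratio
  have hexp : Real.exp (-(t * y)) ≤ 1 := Real.exp_le_one_iff.2 (by nlinarith)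
  have hc : 0 ≤ c := by positivity
  calc (b - a) * (Real.exp ((1 - t) * y) / (2 * p * y ^ 4) - c)
      = (b - a) * (Real.exp y / (2 * p * y ^ 4) * Real.exp (-(t * y)) - c) := by
        rw [div_mul_eq_mul_div, ← Real.exp_add]; ring_nf
    _ ≤ (b - a) * ((Real.exp y / (2 * p * y ^ 4) - c) * Real.exp (-(t * y))) := by
        gcongr; nlinarith
    _ ≤ (b - a) * (k * Real.exp (-(t * y))) := by gcongr
    _ ≤ _ := by rw [← mul_assoc]; gcongr; exact le_card_Icc_floor k

theorem statement8_general
    {Ω : Type*} [MeasurableSpace Ω] (μ : Measure Ω) [IsProbabilityMeasure μ]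
    (X : ℤ → Ω → ℝ) (hmeas : ∀ i, Measurable (X i))
    (hindep : iIndepFun X μ)
    (hexp : ∀ (i : ℤ) (s : ℝ), 0 ≤ s → μ {ω | s < X i ω} = ENNReal.ofReal (Real.exp (-s)))
    (p T A t a b : ℝ) (hp : 0 < p) (hT : 0 < T)
    (ht0 : 0 < t) (ht1 : t < 1) (hab : a < b)
    (lam π : ℕ → ℝ)
    (hlam : ∀ n, lam n ∈ Set.Ioo (0 : ℝ) 1) (hπ : ∀ n, 1 ≤ π n)
    (hlam0 : Tendsto lam atTop (nhds 0))
    (hreg : Tendsto (fun n => (nLam (lam n) : ℝ) / (aLam (lam n) * π n)) atTop (nhds p)) :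
    Tendsto
      (fun n : ℕ =>
        μ {ω | ∀ i : ℤ,
            ⌊a * (kLam p T A (lam n) (π n) : ℝ)⌋ ≤ i →
            i ≤ ⌊b * (kLam p T A (lam n) (π n) : ℝ)⌋ →
            X i ω ≤ t * aLam (lam n)})
      atTop (nhds 0) := by
  have h := tendsto_measure_forall_mem_le_zero hmeas hindep hexp _
    (fun n => (mul_pos ht0 (aLam_pos (hlam n))).le)
    (tendsto_card_window_mul_exp hp hT ht0.le ht1 hab A hlam hπ hlam0 hreg)
  simpa only [mem_Icc, and_imp] using h

theorem statement8
    {Ω : Type*} [MeasurableSpace Ω] (μ : Measure Ω) [IsProbabilityMeasure μ]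
    (X : ℤ → Ω → ℝ) (hmeas : ∀ i, Measurable (X i))
    (hindep : iIndepFun X μ)
    (hexp : ∀ (i : ℤ) (s : ℝ), 0 ≤ s → μ {ω | s < X i ω} = ENNReal.ofReal (Real.exp (-s)))
    (p T A t a b : ℝ) (hp : 0 < p) (hT : 0 < T) (hA : 0 < A)
    (ht0 : 0 < t) (ht1 : t < 1) (hab : a < b)
    (lam π : ℕ → ℝ)
    (hlam : ∀ n, lam n ∈ Set.Ioo (0 : ℝ) 1) (hπ : ∀ n, 1 ≤ π n)
    (hlam0 : Tendsto lam atTop (nhds 0))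
    (hreg : Tendsto (fun n => (nLam (lam n) : ℝ) / (aLam (lam n) * π n)) atTop (nhds p)) :
    Tendsto
      (fun n : ℕ =>
        μ {ω | ∀ i : ℤ,
            ⌊a * (kLam p T A (lam n) (π n) : ℝ)⌋ ≤ i →
            i ≤ ⌊b * (kLam p T A (lam n) (π n) : ℝ)⌋ →
            X i ω ≤ t * aLam (lam n)})
      atTop (nhds 0) :=
  statement8_general μ X hmeas hindep hexp p T A t a b hp hT ht0 ht1 hab lam π hlam hπ hlam0 hreg
end

section
/- Fix λ ∈ (0,1), τ > 0 and h > 0, and set s = τ·log(1/λ) and u = h·log(1/λ). Almost surely the quantities r = min{ k ∈ ℤ : k ≥ 1 and X k > s } and l = max{ k ∈ ℤ : k ≤ −1 and X k > s } are well-defined. Then the probability of the event 'either X 0 > s, or (X 0 ≤ s and Z i ≤ u for every integer i with l < i < r)' equals λ^τ + λ^(2τ)·(1 − λ^τ)·(1 − λ^h)/(λ^τ + λ^h − λ^(τ+h))². -/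
/-!
Write `p = exp (-s)` and `q = exp (-u)`. Almost surely the occupied cluster of `0` at time `s`
is a finite interval `{-m, …, n}`: independent events of probability `1 - p < 1` do not all
occur, so neither side of `0` is occupied forever. The event that the cluster is exactly
`{-m, …, n}` and is regenerated within time `u` constrains `n + m + 3` of the `X`'s and
`n + m + 1` of the `Z`'s, so by independence its probability is `p² xⁿ⁺ᵐ⁺¹` with
`x = (1 - p)(1 - q)`. These events are disjoint and, together with `{s < X 0}`, exhaust the
event up to a null set; summing the double geometric series gives `p + p² x / (1 - x)²`, where
`1 - x = p + q - pq`. Finally `exp (-τ log (1/λ)) = λ ^ τ`.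
-/

open MeasureTheory ProbabilityTheory Filter Finset Real
open scoped ENNReal

section Independence

variable {Ω ι β : Type*} [MeasurableSpace Ω] {μ : Measure Ω} [MeasurableSpace β]

lemma ProbabilityTheory.iIndepFun.measure_setOf_forall_mem {Y : ι → Ω → β}
    (hY : iIndepFun Y μ) (I : Finset ι) {T : ι → Set β} (hT : ∀ i, MeasurableSet (T i)) :
    μ {ω | ∀ i ∈ I, Y i ω ∈ T i} = ∏ i ∈ I, μ (Y i ⁻¹' T i) := by
  rw [← hY.measure_inter_preimage_eq_mul I fun i _ => hT i]
  congr 1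
  ext ω
  simp

lemma ProbabilityTheory.iIndepFun.measure_setOf_forall_mem_eq_zero {Y : ℕ → Ω → β}
    (hY : iIndepFun Y μ) {T : Set β} (hT : MeasurableSet T) {c : ℝ≥0∞} (hc : c < 1)
    (hle : ∀ n, μ (Y n ⁻¹' T) ≤ c) :
    μ {ω | ∀ n, Y n ω ∈ T} = 0 := by
  refine le_antisymm (ge_of_tendsto' (ENNReal.tendsto_pow_atTop_nhds_zero_of_lt_one hc)
    fun N => ?_) zero_le
  calc μ {ω | ∀ n, Y n ω ∈ T} ≤ μ {ω | ∀ n ∈ range N, Y n ω ∈ T} :=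
        measure_mono fun ω h n _ => h n
    _ = ∏ n ∈ range N, μ (Y n ⁻¹' T) := hY.measure_setOf_forall_mem _ fun _ => hT
    _ ≤ c ^ N := by simpa using prod_le_pow_card (range N) _ _ fun n _ => hle n

end Independence

lemma ENNReal.tsum_prod_pow_add (r : ℝ≥0∞) :
    ∑' nm : ℕ × ℕ, r ^ (nm.1 + nm.2) = (1 - r)⁻¹ ^ 2 := by
  simp only [ENNReal.tsum_prod', pow_add, ENNReal.tsum_mul_left, ENNReal.tsum_mul_right,
    ENNReal.tsum_geometric, sq]

/-- With `P k` read as "site `k` is occupied" and `P 0`, this is the occupied cluster of `0`. -/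
def zeroCluster (P : ℤ → Prop) : Set ℤ :=
  {i | ∀ k, (1 ≤ k ∧ k ≤ i) ∨ (i ≤ k ∧ k ≤ -1) → P k}

section ZeroCluster

variable {P : ℤ → Prop}

lemma zeroCluster_eq_Icc {n m : ℕ} (hl : ¬P (-m - 1)) (hr : ¬P (n + 1))
    (hP : ∀ k ∈ Icc (-(m : ℤ)) n, P k) :
    zeroCluster P = Set.Icc (-(m : ℤ)) n := by
  ext i
  simp only [zeroCluster, Set.mem_ofPred_eq, Set.mem_Icc]
  constructor
  · intro h
    constructor
    · by_contra hi
      exact hl (h _ (Or.inr ⟨by omega, by omega⟩))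
    · by_contra hi
      exact hr (h _ (Or.inl ⟨by omega, by omega⟩))
  · rintro ⟨hmi, hin⟩ k hk
    exact hP k (mem_Icc.2 (by omega))

lemma exists_forall_Icc_of_exists_not (h0 : P 0) (hr : ∃ k, 1 ≤ k ∧ ¬P k)
    (hl : ∃ k, k ≤ -1 ∧ ¬P k) :
    ∃ n m : ℕ, ¬P (-m - 1) ∧ ¬P (n + 1) ∧ ∀ k ∈ Icc (-(m : ℤ)) n, P k := by
  classical
  have hr' : ∃ j : ℕ, ¬P (j + 1) := by
    obtain ⟨k, hk, hPk⟩ := hr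
    exact ⟨(k - 1).toNat, by rwa [show ((k - 1).toNat : ℤ) + 1 = k by omega]⟩
  have hl' : ∃ j : ℕ, ¬P (-j - 1) := by
    obtain ⟨k, hk, hPk⟩ := hl
    exact ⟨(-k - 1).toNat, by rwa [show -((-k - 1).toNat : ℤ) - 1 = k by omega]⟩
  refine ⟨Nat.find hr', Nat.find hl', Nat.find_spec hl', Nat.find_spec hr', fun k hk => ?_⟩
  rw [mem_Icc] at hk
  rcases lt_trichotomy k 0 with hk0 | rfl | hk0
  · have := Nat.find_min hl' (m := (-k - 1).toNat) (by omega)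
    rwa [not_not, show -((-k - 1).toNat : ℤ) - 1 = k by omega] at this
  · exact h0
  · have := Nat.find_min hr' (m := (k - 1).toNat) (by omega)
    rwa [not_not, show ((k - 1).toNat : ℤ) + 1 = k by omega] at this

lemma and_forall_zeroCluster_iff {Q : ℤ → Prop} (hr : ∃ k, 1 ≤ k ∧ ¬P k)
    (hl : ∃ k, k ≤ -1 ∧ ¬P k) :
    (P 0 ∧ ∀ i ∈ zeroCluster P, Q i) ↔
      ∃ n m : ℕ, ¬P (-m - 1) ∧ ¬P (n + 1) ∧ ∀ k ∈ Icc (-(m : ℤ)) n, P k ∧ Q k := by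
  constructor
  · rintro ⟨h0, hQ⟩
    obtain ⟨n, m, hlm, hrn, hP⟩ := exists_forall_Icc_of_exists_not h0 hr hl
    rw [zeroCluster_eq_Icc hlm hrn hP] at hQ
    exact ⟨n, m, hlm, hrn, fun k hk => ⟨hP k hk, hQ k (by simpa using hk)⟩⟩
  · rintro ⟨n, m, hlm, hrn, hPQ⟩
    refine ⟨(hPQ 0 (by simp)).1, ?_⟩
    rw [zeroCluster_eq_Icc hlm hrn fun k hk => (hPQ k hk).1]
    exact fun i hi => (hPQ i (by simpa using hi)).2

end ZeroCluster

section UnitExpTail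

variable {Ω ι : Type*} [MeasurableSpace Ω] {μ : Measure Ω}

def HasUnitExpTail (μ : Measure Ω) (Y : Ω → ℝ) : Prop :=
  ∀ s : ℝ, 0 ≤ s → μ {ω | s < Y ω} = ENNReal.ofReal (exp (-s))

lemma HasUnitExpTail.measure_le [IsProbabilityMeasure μ] {Y : Ω → ℝ}
    (hY : HasUnitExpTail μ Y) (hm : Measurable Y) {s : ℝ} (hs : 0 ≤ s) :
    μ {ω | Y ω ≤ s} = ENNReal.ofReal (1 - exp (-s)) := by
  have hcompl : {ω | Y ω ≤ s} = {ω | s < Y ω}ᶜ := by ext; simp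
  rw [hcompl, prob_compl_eq_one_sub (measurableSet_lt measurable_const hm), hY s hs,
    ENNReal.ofReal_sub _ (exp_nonneg _), ENNReal.ofReal_one]

lemma ae_exists_lt_of_injective [IsProbabilityMeasure μ] {Y : ι → Ω → ℝ}
    (hY : iIndepFun Y μ) (hmeas : ∀ i, Measurable (Y i)) (hexp : ∀ i, HasUnitExpTail μ (Y i))
    {s : ℝ} (hs : 0 ≤ s) {f : ℕ → ι} (hf : f.Injective) :
    ∀ᵐ ω ∂μ, ∃ n, s < Y (f n) ω := by
  rw [ae_iff]
  simp only [not_exists, not_lt]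
  exact (hY.precomp hf).measure_setOf_forall_mem_eq_zero measurableSet_Iic
    (ENNReal.ofReal_lt_one.2 (by linarith [exp_pos (-s)]))
    fun n => ((hexp (f n)).measure_le (hmeas _) hs).le

end UnitExpTail

section Cluster

variable {Ω : Type*} {X Z : ℤ → Ω → ℝ} {s u : ℝ}

/-- In the notation of the paper, `l = -m - 1` and `r = n + 1`. -/
def clusterRegenEvent (X Z : ℤ → Ω → ℝ) (s u : ℝ) (n m : ℕ) : Set Ω :=
  {ω | s < X (-m - 1) ω ∧ s < X (n + 1) ω ∧ ∀ k ∈ Icc (-(m : ℤ)) n, X k ω ≤ s ∧ Z k ω ≤ u}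

lemma zeroCluster_eq_Icc_of_mem_clusterRegenEvent {n m : ℕ} {ω : Ω}
    (h : ω ∈ clusterRegenEvent X Z s u n m) :
    zeroCluster (fun k => X k ω ≤ s) = Set.Icc (-(m : ℤ)) n :=
  zeroCluster_eq_Icc (not_le.2 h.1) (not_le.2 h.2.1) fun k hk => (h.2.2 k hk).1

lemma pairwise_disjoint_clusterRegenEvent :
    Pairwise fun nm nm' : ℕ × ℕ =>
      Disjoint (clusterRegenEvent X Z s u nm.1 nm.2) (clusterRegenEvent X Z s u nm'.1 nm'.2) := by
  rintro ⟨n, m⟩ ⟨n', m'⟩ hne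
  refine Set.disjoint_left.2 fun ω h h' => hne ?_
  have hIcc := (zeroCluster_eq_Icc_of_mem_clusterRegenEvent h).symm.trans
    (zeroCluster_eq_Icc_of_mem_clusterRegenEvent h')
  rw [Set.Icc_eq_Icc_iff (by omega)] at hIcc
  simp only [Prod.mk.injEq]
  omega

variable [MeasurableSpace Ω] {μ : Measure Ω}

lemma measurableSet_clusterRegenEvent (hmeasX : ∀ i, Measurable (X i))
    (hmeasZ : ∀ i, Measurable (Z i)) (n m : ℕ) :
    MeasurableSet (clusterRegenEvent X Z s u n m) := by
  simp only [clusterRegenEvent, Set.ofPred_and, Set.ofPred_forall]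
  measurability

lemma measure_clusterRegenEvent [IsProbabilityMeasure μ] (hmeasX : ∀ i, Measurable (X i))
    (hmeasZ : ∀ i, Measurable (Z i)) (hindep : iIndepFun (Sum.elim X Z) μ)
    (hexpX : ∀ i, HasUnitExpTail μ (X i)) (hexpZ : ∀ i, HasUnitExpTail μ (Z i))
    (hs : 0 ≤ s) (hu : 0 ≤ u) (n m : ℕ) :
    μ (clusterRegenEvent X Z s u n m) = ENNReal.ofReal (exp (-s)) ^ 2 *
      (ENNReal.ofReal (1 - exp (-s)) * ENNReal.ofReal (1 - exp (-u))) ^ (n + m + 1) := by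
  classical
  set C := Icc (-(m : ℤ)) n
  have hlC : -(m : ℤ) - 1 ∉ C := by simp [C]
  have hl : -(m : ℤ) - 1 ∉ insert ((n : ℤ) + 1) C := mem_insert.not.2 (not_or.2 ⟨by omega, hlC⟩)
  have hr : (n : ℤ) + 1 ∉ C := by simp [C]
  have hcard : #C = n + m + 1 := by rw [Int.card_Icc]; omega
  let T : ℤ ⊕ ℤ → Set ℝ :=
    Sum.elim (fun k => if k ∈ C then Set.Iic s else Set.Ioi s) fun _ => Set.Iic u
  have hT : ∀ j, MeasurableSet (T j) := by
    rintro (k | k)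
    · by_cases hk : k ∈ C <;> simp [T, hk]
    · exact measurableSet_Iic
  have hevent : clusterRegenEvent X Z s u n m =
      {ω | ∀ j ∈ (insert (-(m : ℤ) - 1) (insert ((n : ℤ) + 1) C)).disjSum C,
        Sum.elim X Z j ω ∈ T j} := by
    ext ω
    simp +contextual [clusterRegenEvent, T, C, forall_and, and_assoc]
  have hvacant : ∀ k ∉ C,
      μ (Sum.elim X Z (.inl k) ⁻¹' T (.inl k)) = ENNReal.ofReal (exp (-s)) := fun k hk => by
    simp only [T, Sum.elim_inl, if_neg hk]
    exact hexpX k s hs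
  have hoccupied : ∀ k ∈ C,
      μ (Sum.elim X Z (.inl k) ⁻¹' T (.inl k)) = ENNReal.ofReal (1 - exp (-s)) := fun k hk => by
    simp only [T, Sum.elim_inl, if_pos hk]
    exact (hexpX k).measure_le (hmeasX k) hs
  have hregen : ∀ k ∈ C,
      μ (Sum.elim X Z (.inr k) ⁻¹' T (.inr k)) = ENNReal.ofReal (1 - exp (-u)) :=
    fun k _ => (hexpZ k).measure_le (hmeasZ k) hu
  rw [hevent, hindep.measure_setOf_forall_mem _ hT, prod_disjSum, prod_insert hl, prod_insert hr,
    hvacant _ hlC, hvacant _ hr, prod_congr rfl hoccupied, prod_congr rfl hregen, prod_const,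
    prod_const, hcard]
  ring

lemma ae_exists_vacant_right_and_left [IsProbabilityMeasure μ] (hmeasX : ∀ i, Measurable (X i))
    (hindep : iIndepFun (Sum.elim X Z) μ) (hexpX : ∀ i, HasUnitExpTail μ (X i)) (hs : 0 ≤ s) :
    ∀ᵐ ω ∂μ, (∃ k : ℤ, 1 ≤ k ∧ s < X k ω) ∧ (∃ k : ℤ, k ≤ -1 ∧ s < X k ω) := by
  have hX : iIndepFun X μ := hindep.precomp (g := Sum.inl) Sum.inl_injective
  filter_upwards [ae_exists_lt_of_injective hX hmeasX hexpX hs (f := fun j : ℕ => (j : ℤ) + 1)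
      (fun a b h => by simpa using h),
    ae_exists_lt_of_injective hX hmeasX hexpX hs (f := fun j : ℕ => -(j : ℤ) - 1)
      (fun a b h => by simpa using h)] with ω ⟨n, hn⟩ ⟨m, hm⟩
  exact ⟨⟨n + 1, by omega, hn⟩, ⟨-m - 1, by omega, hm⟩⟩

lemma vacant_or_regenerated_ae_eq [IsProbabilityMeasure μ] (hmeasX : ∀ i, Measurable (X i))
    (hindep : iIndepFun (Sum.elim X Z) μ) (hexpX : ∀ i, HasUnitExpTail μ (X i)) (hs : 0 ≤ s) :
    {ω | s < X 0 ω ∨ (X 0 ω ≤ s ∧ ∀ i ∈ zeroCluster (fun k => X k ω ≤ s), Z i ω ≤ u)}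
      =ᵐ[μ] ({ω | s < X 0 ω} ∪ ⋃ nm : ℕ × ℕ, clusterRegenEvent X Z s u nm.1 nm.2 : Set Ω) := by
  filter_upwards [ae_exists_vacant_right_and_left hmeasX hindep hexpX hs] with ω ⟨hr, hl⟩
  have key := and_forall_zeroCluster_iff (P := fun k => X k ω ≤ s) (Q := fun k => Z k ω ≤ u)
    (by simpa only [not_le] using hr) (by simpa only [not_le] using hl)
  simp only [not_le] at key
  refine propext (or_congr Iff.rfl (key.trans ?_))
  simp [clusterRegenEvent]

lemma measure_vacant_or_regenerated [IsProbabilityMeasure μ]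
    (hmeasX : ∀ i, Measurable (X i)) (hmeasZ : ∀ i, Measurable (Z i))
    (hindep : iIndepFun (Sum.elim X Z) μ)
    (hexpX : ∀ i, HasUnitExpTail μ (X i)) (hexpZ : ∀ i, HasUnitExpTail μ (Z i))
    (hs : 0 ≤ s) (hu : 0 ≤ u) :
    μ {ω | s < X 0 ω ∨ (X 0 ω ≤ s ∧ ∀ i ∈ zeroCluster (fun k => X k ω ≤ s), Z i ω ≤ u)} =
      ENNReal.ofReal (exp (-s) + exp (-s) ^ 2 * (1 - exp (-s)) * (1 - exp (-u)) /
        (exp (-s) + exp (-u) - exp (-s) * exp (-u)) ^ 2) := by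
  have hdisj : Disjoint {ω | s < X 0 ω} (⋃ nm : ℕ × ℕ, clusterRegenEvent X Z s u nm.1 nm.2) :=
    Set.disjoint_iUnion_right.2 fun nm => Set.disjoint_left.2 fun ω h0 h =>
      (h.2.2 0 (by simp)).1.not_gt h0
  have hmeas := measurableSet_clusterRegenEvent (s := s) (u := u) hmeasX hmeasZ
  rw [measure_congr (vacant_or_regenerated_ae_eq hmeasX hindep hexpX hs),
    measure_union hdisj (.iUnion fun nm => hmeas nm.1 nm.2),
    measure_iUnion pairwise_disjoint_clusterRegenEvent fun nm => hmeas nm.1 nm.2, hexpX 0 s hs]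
  simp_rw [measure_clusterRegenEvent hmeasX hmeasZ hindep hexpX hexpZ hs hu,
    pow_succ (ENNReal.ofReal (1 - exp (-s)) * _), ENNReal.tsum_mul_left,
    ENNReal.tsum_mul_right, ENNReal.tsum_prod_pow_add]
  set p := exp (-s)
  set q := exp (-u)
  have hp : 0 < p := exp_pos _
  have hp1 : p ≤ 1 := exp_le_one_iff.2 (by linarith)
  have hq1 : q ≤ 1 := exp_le_one_iff.2 (by linarith)
  have hx : 0 ≤ (1 - p) * (1 - q) := mul_nonneg (by linarith) (by linarith)
  have hx1 : 0 < 1 - (1 - p) * (1 - q) := by nlinarith [exp_pos (-u)]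
  rw [← ENNReal.ofReal_mul (sub_nonneg.2 hp1), ← ENNReal.ofReal_one, ← ENNReal.ofReal_sub _ hx,
    ← ENNReal.ofReal_inv_of_pos hx1, ← ENNReal.ofReal_pow hp.le,
    ← ENNReal.ofReal_pow (inv_nonneg.2 hx1.le), ← ENNReal.ofReal_mul (by positivity),
    ← ENNReal.ofReal_mul (by positivity), ← ENNReal.ofReal_add hp.le (by positivity)]
  congr 1
  rw [show 1 - (1 - p) * (1 - q) = p + q - p * q by ring, inv_pow]
  ring

end Cluster

theorem statement10
    {Ω : Type*} [MeasurableSpace Ω] (μ : Measure Ω) [IsProbabilityMeasure μ]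
    (X Z : ℤ → Ω → ℝ)
    (hmeasX : ∀ i, Measurable (X i)) (hmeasZ : ∀ i, Measurable (Z i))
    (hindep : iIndepFun (Sum.elim X Z) μ)
    (hexpX : ∀ (i : ℤ) (s : ℝ), 0 ≤ s → μ {ω | s < X i ω} = ENNReal.ofReal (Real.exp (-s)))
    (hexpZ : ∀ (i : ℤ) (s : ℝ), 0 ≤ s → μ {ω | s < Z i ω} = ENNReal.ofReal (Real.exp (-s)))
    (l τ h : ℝ) (hl : l ∈ Set.Ioo (0 : ℝ) 1) (hτ : 0 < τ) (hh : 0 < h) :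
    -- almost surely, the right and left boundaries of the occupied cluster around `0`
    -- at time `τ·log(1/λ)` are well-defined
    (∀ᵐ ω ∂μ, (∃ k : ℤ, 1 ≤ k ∧ τ * Real.log (1 / l) < X k ω) ∧
        (∃ k : ℤ, k ≤ -1 ∧ τ * Real.log (1 / l) < X k ω)) ∧
    -- and the probability that either the site `0` is vacant at time `τ·log(1/λ)`, or it is
    -- occupied and every site of its occupied cluster regenerates within a further
    -- time `h·log(1/λ)`, is the displayed quantity
    μ {ω | τ * Real.log (1 / l) < X 0 ω ∨
        (X 0 ω ≤ τ * Real.log (1 / l) ∧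
          ∀ i : ℤ,
            (∀ k : ℤ, (1 ≤ k ∧ k ≤ i) ∨ (i ≤ k ∧ k ≤ -1) → X k ω ≤ τ * Real.log (1 / l)) →
            Z i ω ≤ h * Real.log (1 / l))}
      = ENNReal.ofReal
          (l ^ τ + l ^ (2 * τ) * (1 - l ^ τ) * (1 - l ^ h)
              / (l ^ τ + l ^ h - l ^ (τ + h)) ^ 2) := by
  obtain ⟨hl0, hl1⟩ := hl
  have hlog : 0 < log (1 / l) := log_pos (one_lt_one_div hl0 hl1)
  have hexp_eq : ∀ t, exp (-(t * log (1 / l))) = l ^ t := fun t => by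
    rw [rpow_def_of_pos hl0, one_div, log_inv]
    congr 1
    ring
  refine ⟨ae_exists_vacant_right_and_left hmeasX hindep hexpX (by positivity),
    (measure_vacant_or_regenerated hmeasX hmeasZ hindep hexpX hexpZ (by positivity)
      (by positivity)).trans ?_⟩
  rw [hexp_eq, hexp_eq, two_mul, rpow_add hl0, rpow_add hl0]
  congr 1
  ring
end

section
/- Fix τ > 0. For λ ∈ (0,1) set s_λ = τ·log(1/λ); define the occupied cluster C_λ(ω) = ∅ if X 0(ω) > s_λ, and otherwise C_λ(ω) = { i ∈ ℤ : l_λ(ω) < i < r_λ(ω) } where r_λ(ω) = min{ k ≥ 1 : X k(ω) > s_λ } and l_λ(ω) = max{ k ≤ −1 : X k(ω) > s_λ } (almost surely well-defined); and define the rescaled regeneration time Ξ_λ(ω) = (1/log(1/λ))·sup{ Z i(ω) : i ∈ C_λ(ω) }, with the convention that the supremum over the empty set is 0. Then for every δ > 0, ℙ( |Ξ_λ − τ| ≥ δ ) tends to 0 as λ → 0⁺ with λ ∈ (0,1). -/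
/-!
Write `a = log (1/λ)`, so that each site is occupied at time `τ a` with probability `1 - λ^τ`
and `ℙ(Z i > c a) = λ^c`. Take `M ≈ λ^{-(τ+δ/4)}` and `N ≈ λ^{-(τ-δ/2)}`. The cluster leaves
`[-M, M]` only if one of the two blocks of `M` sites is fully occupied (probability
`(1 - λ^τ)^M ≤ exp (-λ^{-δ/4})`), and it misses a site of `[0, N]` with probability at most
`(N + 1) λ^τ ≈ λ^{δ/2}`. Inside `[-M, M]` no `Z i` exceeds `(τ + δ/2) a` except with probability
`≈ M λ^{τ+δ/2}`, and some `Z i` with `i ∈ [1, N]` exceeds `(τ - δ) a` except with probability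
`(1 - λ^{τ-δ})^N ≤ exp (-λ^{-δ/2})`. All four bounds tend to `0`.
-/

open MeasureTheory ProbabilityTheory Filter

/-- The occupied cluster around site `0` at time `τ·log(1/λ)`: it is empty when no seed has
fallen on `0`, and otherwise consists of the integers `i` such that every site strictly
between `0` and `i` (together with `i` itself) has received a seed by time `τ·log(1/λ)`. -/
def cluster {Ω : Type*} (X : ℤ → Ω → ℝ) (τ l : ℝ) (ω : Ω) : Set ℤ :=
  {i : ℤ | X 0 ω ≤ τ * Real.log (1 / l) ∧
    ∀ k : ℤ, (1 ≤ k ∧ k ≤ i) ∨ (i ≤ k ∧ k ≤ -1) → X k ω ≤ τ * Real.log (1 / l)}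

/-- The rescaled regeneration time `Ξ_λ = (1/log(1/λ))·sup{ Z i : i ∈ C_λ }`
(with `sSup ∅ = 0` by the real-number convention). -/
noncomputable def Xi {Ω : Type*} (X Z : ℤ → Ω → ℝ) (τ l : ℝ) (ω : Ω) : ℝ :=
  (1 / Real.log (1 / l)) * sSup ((fun i => Z i ω) '' cluster X τ l ω)

open Real Topology

namespace ForestFire

variable {Ω ι : Type*}

def allLe (W : ι → Ω → ℝ) (F : Finset ι) (s : ℝ) : Set Ω := {ω | ∀ i ∈ F, W i ω ≤ s}

@[simp] lemma mem_allLe {W : ι → Ω → ℝ} {F : Finset ι} {s : ℝ} {ω : Ω} :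
    ω ∈ allLe W F s ↔ ∀ i ∈ F, W i ω ≤ s := Iff.rfl

section Exponential

variable [MeasurableSpace Ω] {μ : Measure Ω} {W : ι → Ω → ℝ}
  (hexp : ∀ i (s : ℝ), 0 ≤ s → μ {ω | s < W i ω} = ENNReal.ofReal (exp (-s)))
include hexp

lemma measure_le_eq_one_sub_exp [IsProbabilityMeasure μ] (hW : ∀ i, Measurable (W i)) (i : ι)
    {s : ℝ} (hs : 0 ≤ s) : μ {ω | W i ω ≤ s} = ENNReal.ofReal (1 - exp (-s)) := by
  have hcompl : {ω | W i ω ≤ s} = {ω | s < W i ω}ᶜ := by ext; simp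
  rw [hcompl, prob_compl_eq_one_sub (measurableSet_lt measurable_const (hW i)), hexp i s hs,
    ENNReal.ofReal_sub _ (exp_nonneg _), ENNReal.ofReal_one]

lemma measure_allLe [IsProbabilityMeasure μ] (hind : iIndepFun W μ) (hW : ∀ i, Measurable (W i))
    (F : Finset ι) {s : ℝ} (hs : 0 ≤ s) :
    μ (allLe W F s) = ENNReal.ofReal ((1 - exp (-s)) ^ F.card) := by
  have hinter : allLe W F s = ⋂ i ∈ F, {ω | W i ω ≤ s} := by ext; simp
  rw [hinter,
    hind.meas_biInter (s := fun i => {ω | W i ω ≤ s})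
      fun i _ => ⟨Set.Iic s, measurableSet_Iic, rfl⟩,
    Finset.prod_congr rfl fun i _ => measure_le_eq_one_sub_exp hexp hW i hs, Finset.prod_const,
    ENNReal.ofReal_pow (sub_nonneg.2 (exp_le_one_iff.2 (by linarith)))]

lemma measure_compl_allLe_le (F : Finset ι) {s : ℝ} (hs : 0 ≤ s) :
    μ (allLe W F s)ᶜ ≤ ENNReal.ofReal (F.card * exp (-s)) := by
  have hunion : (allLe W F s)ᶜ = ⋃ i ∈ F, {ω | s < W i ω} := by ext; simp
  rw [hunion, ENNReal.ofReal_mul (Nat.cast_nonneg _), ENNReal.ofReal_natCast, ← nsmul_eq_mul,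
    ← Finset.sum_const]
  exact (measure_biUnion_finset_le _ _).trans_eq (Finset.sum_congr rfl fun i _ => hexp i s hs)

end Exponential

section Cluster

variable {X Z : ℤ → Ω → ℝ} {τ δ l : ℝ} {ω : Ω}

lemma mem_Icc_or_of_mem_cluster {i : ℤ} (hi : i ∈ cluster X τ l ω) (M : ℕ) :
    i ∈ Finset.Icc (-(M : ℤ)) M ∨
      ω ∈ allLe X (Finset.Icc 1 (M : ℤ)) (τ * log (1 / l)) ∨
      ω ∈ allLe X (Finset.Icc (-(M : ℤ)) (-1)) (τ * log (1 / l)) := by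
  by_cases hlo : -(M : ℤ) ≤ i
  · by_cases hhi : i ≤ M
    · exact Or.inl (Finset.mem_Icc.2 ⟨hlo, hhi⟩)
    · refine Or.inr (Or.inl fun k hk => hi.2 k (Or.inl ?_))
      rw [Finset.mem_Icc] at hk
      omega
  · refine Or.inr (Or.inr fun k hk => hi.2 k (Or.inr ?_))
    rw [Finset.mem_Icc] at hk
    omega

lemma mem_cluster_of_mem_allLe {N : ℕ} (h : ω ∈ allLe X (Finset.Icc 0 (N : ℤ)) (τ * log (1 / l)))
    {i : ℤ} (hi : i ∈ Finset.Icc 0 (N : ℤ)) : i ∈ cluster X τ l ω := by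
  rw [Finset.mem_Icc] at hi
  refine ⟨h 0 (by simp), fun k hk => h k ?_⟩
  rw [Finset.mem_Icc]
  omega

lemma exists_lt_of_nonneg_lt_sSup {s : Set ℝ} {t : ℝ} (ht : 0 ≤ t) (h : t < sSup s) :
    ∃ x ∈ s, t < x := by
  rcases s.eq_empty_or_nonempty with rfl | hs
  · rw [Real.sSup_empty] at h
    linarith
  · exact exists_lt_of_lt_csSup hs h

lemma Xi_eq_div : Xi X Z τ l ω = sSup ((fun i => Z i ω) '' cluster X τ l ω) / log (1 / l) :=
  one_div_mul_eq_div _ _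

lemma upper_deviation_subset (hτ : 0 < τ) (hδ : 0 < δ) (hl : l ∈ Set.Ioo 0 1) (M : ℕ) :
    {ω | τ + δ ≤ Xi X Z τ l ω} ⊆
      allLe X (Finset.Icc 1 (M : ℤ)) (τ * log (1 / l)) ∪
        allLe X (Finset.Icc (-(M : ℤ)) (-1)) (τ * log (1 / l)) ∪
        (allLe Z (Finset.Icc (-(M : ℤ)) M) ((τ + δ / 2) * log (1 / l)))ᶜ := by
  have ha : 0 < log (1 / l) := log_pos (one_lt_one_div hl.1 hl.2)
  intro ω hω
  replace hω : (τ + δ) * log (1 / l) ≤ sSup ((fun i => Z i ω) '' cluster X τ l ω) := by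
    rw [← le_div_iff₀ ha, ← Xi_eq_div]
    exact hω
  obtain ⟨_, ⟨i, hi, rfl⟩, hZi⟩ :=
    exists_lt_of_nonneg_lt_sSup (by positivity) (by nlinarith :
      (τ + δ / 2) * log (1 / l) < sSup ((fun i => Z i ω) '' cluster X τ l ω))
  rcases mem_Icc_or_of_mem_cluster hi M with hiM | h | h
  · exact Or.inr fun hall => (hall i hiM).not_gt hZi
  · exact Or.inl (Or.inl h)
  · exact Or.inl (Or.inr h)

lemma lower_deviation_subset (hl : l ∈ Set.Ioo 0 1) (M N : ℕ) :
    {ω | Xi X Z τ l ω ≤ τ - δ} ⊆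
      allLe X (Finset.Icc 1 (M : ℤ)) (τ * log (1 / l)) ∪
        allLe X (Finset.Icc (-(M : ℤ)) (-1)) (τ * log (1 / l)) ∪
        (allLe X (Finset.Icc 0 (N : ℤ)) (τ * log (1 / l)))ᶜ ∪
        allLe Z (Finset.Icc 1 (N : ℤ)) ((τ - δ) * log (1 / l)) := by
  have ha : 0 < log (1 / l) := log_pos (one_lt_one_div hl.1 hl.2)
  intro ω hω
  replace hω : sSup ((fun i => Z i ω) '' cluster X τ l ω) ≤ (τ - δ) * log (1 / l) := by
    rw [← div_le_iff₀ ha, ← Xi_eq_div]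
    exact hω
  by_contra hA
  simp only [Set.mem_union, Set.mem_compl_iff, not_or, not_not] at hA
  obtain ⟨⟨⟨hright, hleft⟩, hfull⟩, hlow⟩ := hA
  have hsub : cluster X τ l ω ⊆ Finset.Icc (-(M : ℤ)) M := fun i hi =>
    (mem_Icc_or_of_mem_cluster hi M).resolve_right (not_or.2 ⟨hright, hleft⟩)
  have hbdd : BddAbove ((fun i => Z i ω) '' cluster X τ l ω) :=
    (((Finset.finite_toSet _).subset hsub).image _).bddAbove
  refine hlow fun i hi => (le_csSup hbdd ⟨i, mem_cluster_of_mem_allLe hfull ?_, rfl⟩).trans hω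
  rw [Finset.mem_Icc] at hi ⊢
  omega

lemma deviation_subset (hτ : 0 < τ) (hδ : 0 < δ) (hl : l ∈ Set.Ioo 0 1) (M N : ℕ) :
    {ω | δ ≤ |Xi X Z τ l ω - τ|} ⊆
      allLe X (Finset.Icc 1 (M : ℤ)) (τ * log (1 / l)) ∪
        allLe X (Finset.Icc (-(M : ℤ)) (-1)) (τ * log (1 / l)) ∪
        (allLe Z (Finset.Icc (-(M : ℤ)) M) ((τ + δ / 2) * log (1 / l)))ᶜ ∪
        (allLe X (Finset.Icc 0 (N : ℤ)) (τ * log (1 / l)))ᶜ ∪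
        allLe Z (Finset.Icc 1 (N : ℤ)) ((τ - δ) * log (1 / l)) := by
  intro ω (hω : δ ≤ |_|)
  rcases le_abs'.1 hω with hlow | hup
  · have := lower_deviation_subset (Z := Z) (δ := δ) hl M N
      (show Xi X Z τ l ω ≤ τ - δ by linarith)
    simp only [Set.mem_union] at this ⊢
    tauto
  · have := upper_deviation_subset (Z := Z) hτ hδ hl M
      (show τ + δ ≤ Xi X Z τ l ω by linarith)
    simp only [Set.mem_union] at this ⊢
    tauto

end Cluster

section Asymptotics

lemma tendsto_one_sub_exp_pow_ceil {b c : ℝ} (hb : 0 ≤ b) (hbc : b < c) :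
    Tendsto (fun a => (1 - exp (-(b * a))) ^ ⌈exp (c * a)⌉₊) atTop (𝓝 0) := by
  have hlim : Tendsto (fun a => exp (-exp ((c - b) * a))) atTop (𝓝 0) :=
    tendsto_exp_neg_atTop_nhds_zero.comp
      (tendsto_exp_atTop.comp (tendsto_id.const_mul_atTop (sub_pos.2 hbc)))
  refine tendsto_of_tendsto_of_tendsto_of_le_of_le' tendsto_const_nhds hlim ?_ ?_ <;>
    filter_upwards [eventually_ge_atTop 0] with a ha <;>
    have hq : 0 ≤ 1 - exp (-(b * a)) := sub_nonneg.2 (exp_le_one_iff.2 (by nlinarith))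
  · positivity
  have hceil : exp ((c - b) * a) ≤ ⌈exp (c * a)⌉₊ * exp (-(b * a)) := by
    rw [show (c - b) * a = c * a + -(b * a) by ring, exp_add]
    exact mul_le_mul_of_nonneg_right (Nat.le_ceil _) (exp_nonneg _)
  calc (1 - exp (-(b * a))) ^ ⌈exp (c * a)⌉₊
      ≤ exp (-exp (-(b * a))) ^ ⌈exp (c * a)⌉₊ := pow_le_pow_left₀ hq (one_sub_le_exp_neg _) _
    _ = exp (-(⌈exp (c * a)⌉₊ * exp (-(b * a)))) := by rw [← exp_nat_mul]; ring_nf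
    _ ≤ exp (-exp ((c - b) * a)) := exp_le_exp.2 (neg_le_neg hceil)

lemma tendsto_ceil_exp_add_one_mul_exp_neg {b c : ℝ} (hb : 0 < b) (hcb : c < b) :
    Tendsto (fun a => ((⌈exp (c * a)⌉₊ : ℝ) + 1) * exp (-(b * a))) atTop (𝓝 0) := by
  have hexp : ∀ k : ℝ, 0 < k → Tendsto (fun a => exp (-(k * a))) atTop (𝓝 0) := fun k hk =>
    tendsto_exp_neg_atTop_nhds_zero.comp (tendsto_id.const_mul_atTop hk)
  have hlim := (hexp (b - c) (sub_pos.2 hcb)).add ((hexp b hb).const_mul 2)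
  rw [zero_add, mul_zero] at hlim
  refine tendsto_of_tendsto_of_tendsto_of_le_of_le tendsto_const_nhds hlim
    (fun a => by positivity) fun a => ?_
  have hsplit : exp (c * a) * exp (-(b * a)) = exp (-((b - c) * a)) := by rw [← exp_add]; ring_nf
  have hceil := Nat.ceil_lt_add_one (exp_pos (c * a)).le
  nlinarith [exp_pos (-(b * a))]

end Asymptotics

noncomputable def deviationBound (τ δ a : ℝ) (M N : ℕ) : ℝ :=
  2 * (1 - exp (-(τ * a))) ^ M + 2 * ((M + 1) * exp (-((τ + δ / 2) * a))) +
    (N + 1) * exp (-(τ * a)) + (1 - exp (-((τ - δ) * a))) ^ N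

lemma tendsto_deviationBound {τ δ : ℝ} (hτ : 0 < τ) (hδ : 0 < δ) (hδτ : δ < τ) :
    Tendsto (fun a => deviationBound τ δ a ⌈exp ((τ + δ / 4) * a)⌉₊ ⌈exp ((τ - δ / 2) * a)⌉₊)
      atTop (𝓝 0) := by
  have h := ((((tendsto_one_sub_exp_pow_ceil hτ.le (by linarith : τ < τ + δ / 4)).const_mul 2).add
    ((tendsto_ceil_exp_add_one_mul_exp_neg (by positivity)
      (by linarith : τ + δ / 4 < τ + δ / 2)).const_mul 2)).add
    (tendsto_ceil_exp_add_one_mul_exp_neg hτ (by linarith : τ - δ / 2 < τ))).add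
    (tendsto_one_sub_exp_pow_ceil (by linarith : 0 ≤ τ - δ) (by linarith : τ - δ < τ - δ / 2))
  simp only [mul_zero, add_zero] at h
  exact h

lemma measure_deviation_le [MeasurableSpace Ω] {μ : Measure Ω} [IsProbabilityMeasure μ]
    {X Z : ℤ → Ω → ℝ} (hmeasX : ∀ i, Measurable (X i)) (hmeasZ : ∀ i, Measurable (Z i))
    (hindep : iIndepFun (Sum.elim X Z) μ)
    (hexpX : ∀ (i : ℤ) (s : ℝ), 0 ≤ s → μ {ω | s < X i ω} = ENNReal.ofReal (exp (-s)))
    (hexpZ : ∀ (i : ℤ) (s : ℝ), 0 ≤ s → μ {ω | s < Z i ω} = ENNReal.ofReal (exp (-s)))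
    {τ δ l : ℝ} (hτ : 0 < τ) (hδ : 0 < δ) (hδτ : δ < τ) (hl : l ∈ Set.Ioo 0 1) (M N : ℕ) :
    μ {ω | δ ≤ |Xi X Z τ l ω - τ|} ≤ ENNReal.ofReal (deviationBound τ δ (log (1 / l)) M N) := by
  set a := log (1 / l)
  have ha : 0 < a := log_pos (one_lt_one_div hl.1 hl.2)
  have hindX : iIndepFun X μ := hindep.precomp (g := Sum.inl) Sum.inl_injective
  have hindZ : iIndepFun Z μ := hindep.precomp (g := Sum.inr) Sum.inr_injective
  have hright := measure_allLe hexpX hindX hmeasX (Finset.Icc 1 (M : ℤ))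
    (by positivity : 0 ≤ τ * a)
  have hleft := measure_allLe hexpX hindX hmeasX (Finset.Icc (-(M : ℤ)) (-1))
    (by positivity : 0 ≤ τ * a)
  have hhigh := measure_compl_allLe_le hexpZ (Finset.Icc (-(M : ℤ)) M)
    (by positivity : 0 ≤ (τ + δ / 2) * a)
  have hfull := measure_compl_allLe_le hexpX (Finset.Icc 0 (N : ℤ)) (by positivity : 0 ≤ τ * a)
  have hlow := measure_allLe hexpZ hindZ hmeasZ (Finset.Icc 1 (N : ℤ))
    (by nlinarith : 0 ≤ (τ - δ) * a)
  rw [show (Finset.Icc 1 (M : ℤ)).card = M by rw [Int.card_Icc]; omega] at hright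
  rw [show (Finset.Icc (-(M : ℤ)) (-1)).card = M by rw [Int.card_Icc]; omega] at hleft
  rw [show (Finset.Icc (-(M : ℤ)) M).card = 2 * M + 1 by rw [Int.card_Icc]; omega] at hhigh
  rw [show (Finset.Icc 0 (N : ℤ)).card = N + 1 by rw [Int.card_Icc]; omega] at hfull
  rw [show (Finset.Icc 1 (N : ℤ)).card = N by rw [Int.card_Icc]; omega] at hlow
  have hp : 0 ≤ 1 - exp (-(τ * a)) := sub_nonneg.2 (exp_le_one_iff.2 (by nlinarith))
  have hp' : 0 ≤ 1 - exp (-((τ - δ) * a)) := sub_nonneg.2 (exp_le_one_iff.2 (by nlinarith))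
  have hunion : ∀ s t : Set Ω, μ (s ∪ t) ≤ μ s + μ t := measure_union_le
  refine (measure_mono (deviation_subset hτ hδ hl M N)).trans <| (hunion _ _).trans <|
    (add_le_add ((hunion _ _).trans <| add_le_add ((hunion _ _).trans <|
      add_le_add (hunion _ _) le_rfl) le_rfl) le_rfl).trans ?_
  rw [hright, hleft, hlow, deviationBound, ENNReal.ofReal_add (by positivity) (by positivity),
    ENNReal.ofReal_add (by positivity) (by positivity),
    ENNReal.ofReal_add (by positivity) (by positivity), two_mul,
    ENNReal.ofReal_add (by positivity) (by positivity)]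
  gcongr
  · refine hhigh.trans (ENNReal.ofReal_le_ofReal ?_)
    push_cast
    nlinarith [exp_pos (-((τ + δ / 2) * a))]
  · exact_mod_cast hfull

end ForestFire

open ForestFire in
theorem statement11
    {Ω : Type*} [MeasurableSpace Ω] (μ : Measure Ω) [IsProbabilityMeasure μ]
    (X Z : ℤ → Ω → ℝ)
    (hmeasX : ∀ i, Measurable (X i)) (hmeasZ : ∀ i, Measurable (Z i))
    (hindep : iIndepFun (Sum.elim X Z) μ)
    (hexpX : ∀ (i : ℤ) (s : ℝ), 0 ≤ s → μ {ω | s < X i ω} = ENNReal.ofReal (Real.exp (-s)))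
    (hexpZ : ∀ (i : ℤ) (s : ℝ), 0 ≤ s → μ {ω | s < Z i ω} = ENNReal.ofReal (Real.exp (-s)))
    (τ : ℝ) (hτ : 0 < τ) (δ : ℝ) (hδ : 0 < δ) :
    Tendsto (fun l : ℝ => μ {ω | δ ≤ |Xi X Z τ l ω - τ|})
      (nhdsWithin 0 (Set.Ioo 0 1)) (nhds 0) := by
  wlog hδτ : δ < τ generalizing δ
  · refine tendsto_of_tendsto_of_tendsto_of_le_of_le tendsto_const_nhds
      (this (τ / 2) (half_pos hτ) (half_lt_self hτ)) (fun _ => zero_le)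
      fun l => measure_mono fun ω (hω : δ ≤ _) => ?_
    exact le_trans (by linarith) hω
  have hlog : Tendsto (fun l : ℝ => log (1 / l)) (𝓝[Set.Ioo 0 1] 0) atTop := by
    simp_rw [one_div, log_inv]
    exact tendsto_neg_atBot_atTop.comp
      (tendsto_log_nhdsGT_zero.mono_left (nhdsWithin_mono _ Set.Ioo_subset_Ioi_self))
  have hbound := ENNReal.tendsto_ofReal ((tendsto_deviationBound hτ hδ hδτ).comp hlog)
  rw [ENNReal.ofReal_zero] at hbound
  refine tendsto_of_tendsto_of_tendsto_of_le_of_le' tendsto_const_nhds hbound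
    (Eventually.of_forall fun _ => zero_le) ?_
  filter_upwards [self_mem_nhdsWithin] with l hl
  exact measure_deviation_le hmeasX hmeasZ hindep hexpX hexpZ hτ hδ hδτ hl _ _
end
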